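/- Let k be an even positive integer and m any positive integer. Then the second group cohomology H²(D₂ₖ, ℤ/m) of the dihedral group D₂ₖ of order 2k with coefficients in ℤ/m endowed with the trivial action is isomorphic, as an abelian group, to the direct sum of three copies of ℤ/gcd(m,2). -/

import Mathlib

/-!
A 2-cocycle `f` with trivial coefficients defines a central extension `E` of `D₂ₙ` by `A`, and
`f` is a coboundary exactly when `E → D₂ₙ` splits. For the lifts `a = (0, r 1)`, `b = (0, sr 0)`
the elements `aⁿ = T`, `b² = U`, `(ba)² = V` are central, and conjugating `aⁿ` by `b` gives
`2T = n (V - U)`. Hence `τ = T - (n/2)(V - U)` is `2`-torsion, and `(U mod 2A, V - U mod 2A, τ)`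
is additive in `f` and vanishes on coboundaries. If all three vanish, `a` and `b` can be corrected
by central elements so that they satisfy the dihedral relations, which yields a splitting. Every
triple is attained: by the pullbacks of the nontrivial class of `ℤ/2` along the two characters of
`D₂ₙ` (`n` even), and by the "carry" of the rotation index reduced by a `2`-torsion element.
For `A = ℤ/m`, both `A/2A` and `A[2]` are `ℤ/gcd(m, 2)`.
-/

open groupCohomology

namespace DihedralGroup

section Presentation

variable {n : ℕ} [NeZero n] {H : Type*} [Group H]

lemma pow_val_add {a : H} (ha : a ^ n = 1) (i j : ZMod n) :
    a ^ (i + j).val = a ^ i.val * a ^ j.val := by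
  rw [← pow_add, pow_eq_pow_mod (i.val + j.val) ha, ZMod.val_add]

lemma pow_val_neg {a : H} (ha : a ^ n = 1) (i : ZMod n) : a ^ (-i).val = (a ^ i.val)⁻¹ := by
  rw [eq_inv_iff_mul_eq_one, ← pow_val_add ha, neg_add_cancel, ZMod.val_zero, pow_zero]

lemma pow_val_mul {a b : H} (ha : a ^ n = 1) (hb : b ^ 2 = 1) (hab : (b * a) ^ 2 = 1)
    (i : ZMod n) : a ^ i.val * b = b * a ^ (-i).val := by
  have hb' : b⁻¹ = b := inv_eq_of_mul_eq_one_right (pow_two b ▸ hb)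
  have hab' : (b * a)⁻¹ = b * a := inv_eq_of_mul_eq_one_right (pow_two (b * a) ▸ hab)
  have hsemi : SemiconjBy b a⁻¹ a := by
    have h : a⁻¹ * b = b * a := by rw [← hab', mul_inv_rev, hb']
    calc b * a⁻¹ = a * (a⁻¹ * b) * a⁻¹ := by group
      _ = a * b := by rw [h]; group
  rw [pow_val_neg ha, ← inv_pow, (hsemi.pow_right i.val).eq]

def lift (a b : H) (ha : a ^ n = 1) (hb : b ^ 2 = 1) (hab : (b * a) ^ 2 = 1) :
    DihedralGroup n →* H where
  toFun
    | r i => a ^ i.val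
    | sr i => b * a ^ i.val
  map_one' := show a ^ (0 : ZMod n).val = 1 by rw [ZMod.val_zero, pow_zero]
  map_mul' := by
    rintro (i | i) (j | j)
    · simp only [r_mul_r, pow_val_add ha]
    · simp only [r_mul_sr, sub_eq_neg_add, pow_val_add ha, ← mul_assoc, pow_val_mul ha hb hab]
    · simp only [sr_mul_r, pow_val_add ha, mul_assoc]
    · simp only [sr_mul_sr, sub_eq_neg_add, pow_val_add ha]
      rw [← mul_assoc, mul_assoc b, pow_val_mul ha hb hab, ← mul_assoc, ← pow_two, hb, one_mul]

@[simp]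
lemma lift_r_one (a b : H) (ha : a ^ n = 1) (hb : b ^ 2 = 1) (hab : (b * a) ^ 2 = 1) :
    lift a b ha hb hab (r 1) = a := by
  change a ^ (1 : ZMod n).val = a
  rw [ZMod.val_one_eq_one_mod, ← pow_eq_pow_mod 1 ha, pow_one]

@[simp]
lemma lift_sr_zero (a b : H) (ha : a ^ n = 1) (hb : b ^ 2 = 1) (hab : (b * a) ^ 2 = 1) :
    lift a b ha hb hab (sr 0) = b :=
  show b * a ^ (0 : ZMod n).val = b by rw [ZMod.val_zero, pow_zero, mul_one]

lemma hom_ext {φ ψ : DihedralGroup n →* H} (hr : φ (r 1) = ψ (r 1)) (hs : φ (sr 0) = ψ (sr 0)) :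
    φ = ψ := by
  have hr' : ∀ i : ZMod n, φ (r i) = ψ (r i) := fun i => by
    rw [← ZMod.natCast_zmod_val i, ← r_one_pow, map_pow, map_pow, hr]
  ext (i | i)
  · exact hr' i
  · rw [← zero_add i, ← sr_mul_r, map_mul, map_mul, hs, hr']

end Presentation

section Characters

variable {n : ℕ}

def reflChar : DihedralGroup n → ZMod 2
  | r _ => 0
  | sr _ => 1

def parity : DihedralGroup n → ZMod 2
  | r i => i.cast
  | sr i => i.cast

@[simp] lemma reflChar_r (i : ZMod n) : reflChar (r i) = 0 := rfl

@[simp] lemma reflChar_sr (i : ZMod n) : reflChar (sr i) = 1 := rfl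

@[simp] lemma reflChar_one : reflChar (1 : DihedralGroup n) = 0 := rfl

@[simp] lemma parity_r (i : ZMod n) : parity (r i) = i.cast := rfl

@[simp] lemma parity_sr (i : ZMod n) : parity (sr i) = i.cast := rfl

@[simp] lemma parity_one : parity (1 : DihedralGroup n) = 0 := ZMod.cast_zero

lemma reflChar_mul (g h : DihedralGroup n) : reflChar (g * h) = reflChar g + reflChar h := by
  rcases g with i | i <;> rcases h with j | j <;> rfl

lemma parity_mul (hn : Even n) (g h : DihedralGroup n) : parity (g * h) = parity g + parity h := by
  have h2 := hn.two_dvd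
  rcases g with i | i <;> rcases h with j | j <;>
    simp only [parity, r_mul_r, r_mul_sr, sr_mul_r, sr_mul_sr, ZMod.cast_add h2, sub_eq_add_neg,
      ZMod.cast_neg h2, ZMod.neg_eq_self_mod_two, add_comm]

end Characters

section Carry

variable {n : ℕ}

def index : DihedralGroup n → ZMod n
  | r i => i
  | sr i => i

def sign : DihedralGroup n → ℤ
  | r _ => 1
  | sr _ => -1

@[simp] lemma index_r (i : ZMod n) : index (r i) = i := rfl

@[simp] lemma index_sr (i : ZMod n) : index (sr i) = i := rfl

@[simp] lemma index_one : index (1 : DihedralGroup n) = 0 := rfl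

@[simp] lemma sign_r (i : ZMod n) : sign (r i) = 1 := rfl

@[simp] lemma sign_sr (i : ZMod n) : sign (sr i) = -1 := rfl

@[simp] lemma sign_one : sign (1 : DihedralGroup n) = 1 := rfl

lemma sign_mul (g h : DihedralGroup n) : sign (g * h) = sign g * sign h := by
  rcases g with i | i <;> rcases h with j | j <;> rfl

/-- Lifting `r i` and `sr i` to the infinite dihedral group `ℤ ⋊ ℤˣ` via `i ↦ i.val`, the
defect of this lift from being multiplicative is `n * carry`. -/
def carry (g h : DihedralGroup n) : ℤ :=
  (sign h * (index g).val + (index h).val - (index (g * h)).val) / n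

lemma mul_carry [NeZero n] (g h : DihedralGroup n) :
    n * carry g h = sign h * (index g).val + (index h).val - (index (g * h)).val := by
  refine Int.mul_ediv_cancel' ((ZMod.intCast_zmod_eq_zero_iff_dvd _ n).1 ?_)
  rcases g with i | i <;> rcases h with j | j <;>
    simp [r_mul_r, r_mul_sr, sr_mul_r, sr_mul_sr, ZMod.natCast_val] <;> ring

lemma carry_mul_add [NeZero n] (g h j : DihedralGroup n) :
    carry (g * h) j + sign j * carry g h = carry h j + carry g (h * j) := by
  refine mul_left_cancel₀ (Int.natCast_ne_zero.2 (NeZero.ne n)) ?_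
  simp only [mul_add, mul_left_comm _ (sign j), mul_carry, sign_mul, mul_assoc]
  ring

lemma sum_carry_r_one (hn : 1 < n) :
    ∑ t ∈ Finset.range n, carry (r t : DihedralGroup n) (r 1) = 1 := by
  have : NeZero n := ⟨by omega⟩
  have : Fact (1 < n) := ⟨hn⟩
  have htel : ∑ t ∈ Finset.range n,
      (((t : ZMod n).val : ℤ) - ((t + 1 : ℕ) : ZMod n).val) = 0 := by
    rw [Finset.sum_range_sub', Nat.cast_zero, ZMod.natCast_self, sub_self]
  refine mul_left_cancel₀ (Int.natCast_ne_zero.2 (NeZero.ne n)) ?_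
  rw [Finset.mul_sum, mul_one]
  calc ∑ t ∈ Finset.range n, (n : ℤ) * carry (r t : DihedralGroup n) (r 1)
      = ∑ t ∈ Finset.range n, (1 + (((t : ZMod n).val : ℤ) - ((t + 1 : ℕ) : ZMod n).val)) :=
        Finset.sum_congr rfl fun t _ => by
          rw [mul_carry, r_mul_r, Nat.cast_succ]; simp [ZMod.val_one]; ring
    _ = n := by rw [Finset.sum_add_distrib, htel]; simp

end Carry

end DihedralGroup

lemma Nat.sum_range_mod_two (n : ℕ) : ∑ t ∈ Finset.range n, t % 2 = n / 2 := by
  induction n with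
  | zero => rfl
  | succ n ih => rw [Finset.sum_range_succ, ih]; omega

lemma ModN.mkQ_eq_zero_iff {G : Type*} [AddCommGroup G] {n : ℕ} (x : G) :
    ModN.mkQ n x = 0 ↔ ∃ y, n • y = x := by
  simp [ModN.mkQ, Submodule.Quotient.mk_eq_zero, natCast_zsmul]

lemma ModN.mkQ_surjective {G : Type*} [AddCommGroup G] (n : ℕ) :
    Function.Surjective (ModN.mkQ (G := G) n) :=
  Submodule.mkQ_surjective _

namespace groupCohomology

section Extension

variable {G A : Type} [Group G] [AddCommGroup A]

theorem mem_cocycles₂_trivial_iff (f : G × G → A) :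
    f ∈ cocycles₂ (Rep.trivial ℤ G A) ↔
      ∀ g h j : G, f (g * h, j) + f (g, h) = f (h, j) + f (g, h * j) := by
  rw [mem_cocycles₂_iff]
  rfl

theorem cocycles₂_trivial_map_mul (f : cocycles₂ (Rep.trivial ℤ G A)) (g h j : G) :
    f (g * h, j) + f (g, h) = f (h, j) + f (g, h * j) :=
  (mem_cocycles₂_trivial_iff f).1 f.2 g h j

theorem cocycles₂_trivial_map_one_snd (f : cocycles₂ (Rep.trivial ℤ G A)) (g : G) :
    f (g, 1) = f (1, 1) :=
  cocycles₂_map_one_snd f g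

@[ext]
structure CocycleExtension (f : cocycles₂ (Rep.trivial ℤ G A)) where
  val : A
  base : G

namespace CocycleExtension

variable {f : cocycles₂ (Rep.trivial ℤ G A)}

-- Subtracting `f (1, 1)` makes `(0, 1)` the unit.
instance : Mul (CocycleExtension f) :=
  ⟨fun x y => ⟨x.val + y.val + f (x.base, y.base) - f (1, 1), x.base * y.base⟩⟩

instance : One (CocycleExtension f) := ⟨⟨0, 1⟩⟩

instance : Inv (CocycleExtension f) :=
  ⟨fun x => ⟨-x.val - f (x.base⁻¹, x.base) + f (1, 1), x.base⁻¹⟩⟩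

@[simp] lemma mul_val (x y : CocycleExtension f) :
    (x * y).val = x.val + y.val + f (x.base, y.base) - f (1, 1) := rfl

@[simp] lemma mul_base (x y : CocycleExtension f) : (x * y).base = x.base * y.base := rfl

@[simp] lemma inv_val (x : CocycleExtension f) :
    x⁻¹.val = -x.val - f (x.base⁻¹, x.base) + f (1, 1) := rfl

@[simp] lemma inv_base (x : CocycleExtension f) : x⁻¹.base = x.base⁻¹ := rfl

@[simp] lemma one_val : (1 : CocycleExtension f).val = 0 := rfl

@[simp] lemma one_base : (1 : CocycleExtension f).base = 1 := rfl

instance : Group (CocycleExtension f) :=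
  Group.ofLeftAxioms
    (fun x y z => by
      ext
      · simp only [mul_val, mul_base]
        linear_combination (norm := abel) cocycles₂_trivial_map_mul f x.base y.base z.base
      · exact mul_assoc _ _ _)
    (fun x => by ext <;> simp [cocycles₂_map_one_fst f])
    (fun x => by
      ext
      · simp only [mul_val, inv_val, inv_base, one_val]
        abel
      · exact inv_mul_cancel x.base)

def proj : CocycleExtension f →* G where
  toFun := base
  map_one' := rfl
  map_mul' _ _ := rfl

def incl (a : A) : CocycleExtension f := ⟨a, 1⟩

def sect (g : G) : CocycleExtension f := ⟨0, g⟩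

lemma incl_mul (a : A) (x : CocycleExtension f) : incl a * x = ⟨a + x.val, x.base⟩ := by
  ext <;> simp [incl, cocycles₂_map_one_fst f]

lemma mul_incl (a : A) (x : CocycleExtension f) : x * incl a = ⟨x.val + a, x.base⟩ := by
  ext <;> simp [incl, cocycles₂_trivial_map_one_snd f]

lemma commute_incl (a : A) (x : CocycleExtension f) : Commute (incl a) x := by
  rw [Commute, SemiconjBy, incl_mul, mul_incl, add_comm]

lemma incl_add (a b : A) : (incl (a + b) : CocycleExtension f) = incl a * incl b := by
  rw [incl_mul]; rfl

lemma incl_zero : (incl 0 : CocycleExtension f) = 1 := rfl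

lemma incl_injective : Function.Injective (incl : A → CocycleExtension f) :=
  fun _ _ h => congrArg val h

lemma incl_nsmul (m : ℕ) (a : A) : (incl (m • a) : CocycleExtension f) = incl a ^ m := by
  induction m with
  | zero => rw [zero_nsmul, incl_zero, pow_zero]
  | succ m ih => rw [succ_nsmul, incl_add, ih, pow_succ]

lemma incl_neg (a : A) : (incl (-a) : CocycleExtension f) = (incl a)⁻¹ :=
  eq_inv_of_mul_eq_one_left (by rw [← incl_add, neg_add_cancel, incl_zero])

lemma incl_mul_pow (a : A) (x : CocycleExtension f) (m : ℕ) :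
    (incl a * x) ^ m = incl (m • a) * x ^ m := by
  rw [(commute_incl a x).mul_pow, incl_nsmul]

lemma sect_mul_sect (g h : G) :
    (sect g * sect h : CocycleExtension f) = incl (f (g, h) - f (1, 1)) * sect (g * h) := by
  rw [incl_mul]; ext <;> simp [sect]

lemma sect_pow (g : G) (m : ℕ) :
    (sect g ^ m : CocycleExtension f) =
      ⟨∑ t ∈ Finset.range m, (f (g ^ t, g) - f (1, 1)), g ^ m⟩ := by
  induction m with
  | zero => rw [pow_zero]; ext <;> simp
  | succ m ih =>
    rw [pow_succ, ih]
    ext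
    · simp only [mul_val, sect, Finset.sum_range_succ]; abel
    · exact (pow_succ g m).symm

theorem mem_coboundaries₂_of_splitting (φ : G →* CocycleExtension f) (hφ : proj.comp φ = .id G) :
    ⇑f ∈ coboundaries₂ (Rep.trivial ℤ G A) := by
  have hbase (g : G) : (φ g).base = g := DFunLike.congr_fun hφ g
  refine ⟨fun g => f (1, 1) - (φ g).val, funext fun ⟨g, h⟩ => ?_⟩
  have hval := congrArg val (map_mul φ g h)
  simp only [mul_val, hbase] at hval
  simp only [d₁₂_hom_apply, Representation.trivial_apply]
  linear_combination (norm := abel) hval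

end CocycleExtension

/-- The pullback of the nontrivial class in `H² (ZMod 2, A)` along a character `χ`. -/
def charCocycle (χ : G → ZMod 2) (a : A) : G × G → A :=
  fun p => ((χ p.1).val * (χ p.2).val) • a

lemma charCocycle_mem {χ : G → ZMod 2} (hχ : ∀ g h, χ (g * h) = χ g + χ h) (a : A) :
    charCocycle χ a ∈ cocycles₂ (Rep.trivial ℤ G A) := by
  have key : ∀ x y z : ZMod 2,
      (x + y).val * z.val + x.val * y.val = y.val * z.val + x.val * (y + z).val := by decide
  rw [mem_cocycles₂_trivial_iff]
  intro g h j
  simp only [charCocycle, hχ, ← add_nsmul, key]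

end Extension

section Dihedral

open DihedralGroup CocycleExtension Finset

variable {n : ℕ} {A : Type} [AddCommGroup A]

-- The elements `T`, `U`, `V` of the header: see `sect_r_one_pow`, `sect_sr_zero_sq` and
-- `sect_sr_zero_mul_sect_r_one_sq`.
def rotPow : (DihedralGroup n × DihedralGroup n → A) →+ A :=
  AddMonoidHom.mk' (fun f => ∑ t ∈ range n, (f (r t, r 1) - f (1, 1)))
    (fun f g => by simp only [Pi.add_apply, ← sum_add_distrib]; congr! 1; abel)

def reflSq : (DihedralGroup n × DihedralGroup n → A) →+ A :=
  AddMonoidHom.mk' (fun f => f (sr 0, sr 0) - f (1, 1))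
    (fun f g => by simp only [Pi.add_apply]; abel)

def reflRotSq : (DihedralGroup n × DihedralGroup n → A) →+ A :=
  AddMonoidHom.mk' (fun f => 2 • (f (sr 0, r 1) - f (1, 1)) + (f (sr 1, sr 1) - f (1, 1)))
    (fun f g => by simp only [Pi.add_apply]; abel)

lemma rotPow_apply (f : DihedralGroup n × DihedralGroup n → A) :
    rotPow f = ∑ t ∈ range n, (f (r t, r 1) - f (1, 1)) := rfl

lemma reflSq_apply (f : DihedralGroup n × DihedralGroup n → A) :
    reflSq f = f (sr 0, sr 0) - f (1, 1) := rfl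

lemma reflRotSq_apply (f : DihedralGroup n × DihedralGroup n → A) :
    reflRotSq f = 2 • (f (sr 0, r 1) - f (1, 1)) + (f (sr 1, sr 1) - f (1, 1)) := rfl

section Splitting

variable {f : cocycles₂ (Rep.trivial ℤ (DihedralGroup n) A)}

lemma sect_r_one_pow : (sect (r 1) ^ n : CocycleExtension f) = incl (rotPow ⇑f) := by
  rw [sect_pow, r_one_pow_n, rotPow_apply]
  simp only [r_one_pow]
  rfl

lemma sect_sr_zero_sq : (sect (sr 0) ^ 2 : CocycleExtension f) = incl (reflSq ⇑f) := by
  rw [sq, sect_mul_sect, sr_mul_sr, sub_self, r_zero, reflSq_apply]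
  exact mul_one _

lemma sect_sr_zero_mul_sect_r_one_sq :
    ((sect (sr 0) * sect (r 1)) ^ 2 : CocycleExtension f) = incl (reflRotSq ⇑f) := by
  rw [sect_mul_sect, sr_mul_r, zero_add, incl_mul_pow, sq (sect (sr 1)), sect_mul_sect,
    sr_mul_sr, sub_self, r_zero, reflRotSq_apply, incl_add]
  exact congrArg _ (mul_one _)

/-- Conjugating `(0, r 1) ^ n` by `(0, sr 0)` inverts it up to the central twist. -/
theorem two_nsmul_rotPow :
    2 • rotPow ⇑f = n • (reflRotSq ⇑f - reflSq ⇑f) := by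
  set a : CocycleExtension f := sect (r 1)
  set b : CocycleExtension f := sect (sr 0)
  have hconj : b * a * b⁻¹ = incl (reflRotSq ⇑f - reflSq ⇑f) * a⁻¹ := by
    have hbab : b * a * b = incl (reflRotSq ⇑f) * a⁻¹ := by
      rw [eq_mul_inv_iff_mul_eq, ← sect_sr_zero_mul_sect_r_one_sq, sq, mul_assoc (b * a)]
    have hbinv : b⁻¹ = incl (-reflSq ⇑f) * b := by
      rw [incl_neg, eq_inv_mul_iff_mul_eq, ← sect_sr_zero_sq, sq]
      exact mul_inv_cancel_right b b
    rw [hbinv, ← mul_assoc, ← (commute_incl _ _).eq, mul_assoc, hbab, ← mul_assoc, ← incl_add,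
      neg_add_eq_sub]
  have hpow := conj_pow (a := b) (b := a) (i := n)
  rw [hconj, incl_mul_pow, inv_pow, sect_r_one_pow, ← (commute_incl _ b).eq, mul_assoc,
    mul_inv_cancel, mul_one, ← incl_neg, ← incl_add] at hpow
  linear_combination (norm := abel) -incl_injective hpow

def torsionInv : (DihedralGroup n × DihedralGroup n → A) →+ A :=
  rotPow - (n / 2) • (reflRotSq - reflSq)

lemma torsionInv_apply (f : DihedralGroup n × DihedralGroup n → A) :
    torsionInv f = rotPow f - (n / 2) • (reflRotSq f - reflSq f) := rfl

lemma two_nsmul_torsionInv (hn : Even n) : 2 • torsionInv ⇑f = 0 := by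
  rw [torsionInv_apply, smul_sub, smul_smul, Nat.mul_div_cancel' hn.two_dvd, two_nsmul_rotPow,
    sub_self]

theorem mem_coboundaries₂_of_invariants [NeZero n] (hn : Even n)
    (hU : ∃ β, 2 • β = reflSq ⇑f) (hZ : ∃ ζ, 2 • ζ = reflRotSq ⇑f - reflSq ⇑f)
    (hτ : torsionInv ⇑f = 0) :
    ⇑f ∈ coboundaries₂ (Rep.trivial ℤ (DihedralGroup n) A) := by
  obtain ⟨β, hβ⟩ := hU
  obtain ⟨ζ, hζ⟩ := hZ
  have hT : rotPow ⇑f = n • ζ := by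
    rw [torsionInv_apply, sub_eq_zero, ← hζ, smul_smul, Nat.div_mul_cancel hn.two_dvd] at hτ
    exact hτ
  set a : CocycleExtension f := incl (-ζ) * sect (r 1)
  set b : CocycleExtension f := incl (-β) * sect (sr 0)
  have ha : a ^ n = 1 := by
    rw [incl_mul_pow, sect_r_one_pow, ← incl_add, hT, smul_neg, neg_add_cancel, incl_zero]
  have hb : b ^ 2 = 1 := by
    rw [incl_mul_pow, sect_sr_zero_sq, ← incl_add, ← hβ, smul_neg, neg_add_cancel, incl_zero]
  have hab : (b * a) ^ 2 = 1 := by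
    have hba : b * a = incl (-β + -ζ) * (sect (sr 0) * sect (r 1)) := by
      rw [incl_add, mul_assoc, mul_assoc, (commute_incl (-ζ) (sect (sr 0))).left_comm]
    rw [hba, incl_mul_pow, sect_sr_zero_mul_sect_r_one_sq, ← incl_add, ← incl_zero]
    congr 1
    linear_combination (norm := abel) -hβ - hζ
  refine mem_coboundaries₂_of_splitting (DihedralGroup.lift a b ha hb hab)
    (DihedralGroup.hom_ext ?_ ?_) <;> simp [a, b, proj, incl, sect]

end Splitting

section Coboundary

variable {f : DihedralGroup n × DihedralGroup n → A} {x : DihedralGroup n → A}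

lemma reflSq_of_coboundary (hf : ∀ g h, f (g, h) = x h - x (g * h) + x g) :
    reflSq f = 2 • (x (sr 0) - x 1) := by
  simp only [reflSq_apply, hf, sr_mul_sr, sub_self, r_zero, mul_one]
  abel

lemma reflRotSq_sub_reflSq_of_coboundary (hf : ∀ g h, f (g, h) = x h - x (g * h) + x g) :
    reflRotSq f - reflSq f = 2 • (x (r 1) - x 1) := by
  simp only [reflRotSq_apply, reflSq_apply, hf, sr_mul_sr, sr_mul_r, sub_self, zero_add, r_zero,
    mul_one]
  abel

lemma rotPow_of_coboundary (hf : ∀ g h, f (g, h) = x h - x (g * h) + x g) :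
    rotPow f = n • (x (r 1) - x 1) := by
  have htel : ∑ t ∈ range n, (x (r t) - x (r (t + 1 : ℕ))) = 0 := by
    rw [sum_range_sub', Nat.cast_zero, ZMod.natCast_self, sub_self]
  calc rotPow f = ∑ t ∈ range n, ((x (r 1) - x 1) + (x (r t) - x (r (t + 1 : ℕ)))) :=
        (rotPow_apply f).trans <| sum_congr rfl fun t _ => by
          rw [hf, r_mul_r, Nat.cast_succ, hf, mul_one]; abel
    _ = n • (x (r 1) - x 1) := by rw [sum_add_distrib, htel, sum_const, card_range, add_zero]

lemma torsionInv_of_coboundary (hn : Even n) (hf : ∀ g h, f (g, h) = x h - x (g * h) + x g) :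
    torsionInv f = 0 := by
  rw [torsionInv_apply, reflRotSq_sub_reflSq_of_coboundary hf, rotPow_of_coboundary hf,
    smul_smul, Nat.div_mul_cancel hn.two_dvd, sub_self]

end Coboundary

def carryCocycle (w : A) : DihedralGroup n × DihedralGroup n → A :=
  fun p => carry p.1 p.2 • w

-- `carry` is a cocycle for the action of `sign` on `ℤ`, which becomes trivial on `2`-torsion.
lemma carryCocycle_mem [NeZero n] {w : A} (hw : 2 • w = 0) :
    carryCocycle w ∈ cocycles₂ (Rep.trivial ℤ (DihedralGroup n) A) := by
  have hsign (g : DihedralGroup n) (c : ℤ) : (sign g * c) • w = c • w := by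
    rcases g with i | i
    · rw [sign, one_mul]
    · rw [sign, neg_one_mul, neg_zsmul, neg_eq_iff_add_eq_zero, ← smul_add, ← two_nsmul, hw,
        smul_zero]
  rw [mem_cocycles₂_trivial_iff]
  intro g h j
  simp only [carryCocycle]
  rw [← hsign j (carry g h), ← add_zsmul, ← add_zsmul, carry_mul_add]

def dihedralInvariants : (DihedralGroup n × DihedralGroup n → A) →+ A × A × A :=
  reflSq.prod ((reflRotSq - reflSq).prod torsionInv)

lemma dihedralInvariants_apply (f : DihedralGroup n × DihedralGroup n → A) :
    dihedralInvariants f = (reflSq f, reflRotSq f - reflSq f, torsionInv f) := rfl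

lemma dihedralInvariants_charCocycle_reflChar (a : A) :
    dihedralInvariants (charCocycle reflChar a : DihedralGroup n × DihedralGroup n → A) =
      (a, 0, 0) := by
  simp [dihedralInvariants_apply, torsionInv_apply, rotPow_apply, reflRotSq_apply, reflSq_apply,
    charCocycle, ZMod.val_one]

lemma dihedralInvariants_charCocycle_parity (hn : Even n) (b : A) :
    dihedralInvariants (charCocycle parity b : DihedralGroup n × DihedralGroup n → A) =
      (0, b, 0) := by
  have h2 := hn.two_dvd
  have hrot : rotPow (charCocycle parity b : DihedralGroup n × DihedralGroup n → A) =
      (n / 2) • b := by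
    simp [rotPow_apply, charCocycle, ZMod.cast_natCast h2, ZMod.cast_one h2, ZMod.val_natCast,
      ZMod.val_one, ← sum_smul, Nat.sum_range_mod_two]
  simp [dihedralInvariants_apply, torsionInv_apply, hrot, reflRotSq_apply, reflSq_apply,
    charCocycle, ZMod.cast_one h2, ZMod.val_one]

lemma dihedralInvariants_carryCocycle (hn : 1 < n) (w : A) :
    dihedralInvariants (carryCocycle w : DihedralGroup n × DihedralGroup n → A) = (0, 0, w) := by
  have hrot : rotPow (carryCocycle w : DihedralGroup n × DihedralGroup n → A) = w := by
    have h11 : carry (1 : DihedralGroup n) 1 = 0 := by simp [carry]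
    simp [rotPow_apply, carryCocycle, h11, ← sum_smul, sum_carry_r_one hn]
  simp [dihedralInvariants_apply, torsionInv_apply, hrot, reflRotSq_apply, reflSq_apply,
    carryCocycle, carry]

def dihedralClass (hn : Even n) :
    cocycles₂ (Rep.trivial ℤ (DihedralGroup n) A) →+
      ModN A 2 × ModN A 2 × AddSubgroup.torsionBy A 2 where
  toFun f := (ModN.mkQ 2 (dihedralInvariants ⇑f).1, ModN.mkQ 2 (dihedralInvariants ⇑f).2.1,
    ⟨(dihedralInvariants ⇑f).2.2, AddSubgroup.torsionBy.nsmul_iff.2 (two_nsmul_torsionInv hn)⟩)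
  map_zero' := by
    have h0 : ⇑(0 : cocycles₂ (Rep.trivial ℤ (DihedralGroup n) A)) = 0 := rfl
    ext <;> simp [h0]
  map_add' f g := by
    have hfg : ⇑(f + g) = ⇑f + ⇑g := rfl
    ext <;> simp [hfg]

lemma dihedralClass_eq_zero_iff [NeZero n] (hn : Even n)
    (f : cocycles₂ (Rep.trivial ℤ (DihedralGroup n) A)) :
    dihedralClass hn f = 0 ↔ ⇑f ∈ coboundaries₂ (Rep.trivial ℤ (DihedralGroup n) A) := by
  simp only [dihedralClass, AddMonoidHom.coe_mk, ZeroHom.coe_mk, Prod.mk_eq_zero,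
    ModN.mkQ_eq_zero_iff, dihedralInvariants_apply, AddSubgroup.mk_eq_zero]
  constructor
  · rintro ⟨hU, hZ, hτ⟩
    exact mem_coboundaries₂_of_invariants hn hU hZ hτ
  · rintro ⟨x, hx⟩
    have hf (g h : DihedralGroup n) : f (g, h) = x h - x (g * h) + x g := (congrFun hx (g, h)).symm
    exact ⟨⟨_, (reflSq_of_coboundary hf).symm⟩, ⟨_, (reflRotSq_sub_reflSq_of_coboundary hf).symm⟩,
      torsionInv_of_coboundary hn hf⟩

lemma dihedralClass_surjective [NeZero n] (hn : Even n) :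
    Function.Surjective (dihedralClass (A := A) hn) := by
  rintro ⟨p, q, w⟩
  obtain ⟨a, rfl⟩ := ModN.mkQ_surjective 2 p
  obtain ⟨b, rfl⟩ := ModN.mkQ_surjective 2 q
  have hn₁ : 1 < n := by obtain ⟨k, rfl⟩ := hn; have := NeZero.ne (k + k); omega
  let F : DihedralGroup n × DihedralGroup n → A :=
    charCocycle reflChar a + charCocycle parity b + carryCocycle (w : A)
  have hF : F ∈ cocycles₂ (Rep.trivial ℤ (DihedralGroup n) A) :=
    add_mem (add_mem (charCocycle_mem reflChar_mul a) (charCocycle_mem (parity_mul hn) b))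
      (carryCocycle_mem (AddSubgroup.torsionBy.nsmul_iff.1 w.2))
  have hinv : dihedralInvariants F = (a, b, (w : A)) := by
    simp only [F, map_add, dihedralInvariants_charCocycle_reflChar,
      dihedralInvariants_charCocycle_parity hn, dihedralInvariants_carryCocycle hn₁]
    simp
  refine ⟨⟨F, hF⟩, ?_⟩
  have hcoe : ⇑(⟨F, hF⟩ : cocycles₂ (Rep.trivial ℤ (DihedralGroup n) A)) = F := rfl
  ext <;> simp only [dihedralClass, AddMonoidHom.coe_mk, ZeroHom.coe_mk, hcoe, hinv]

noncomputable def H2DihedralAddEquiv [NeZero n] (hn : Even n) :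
    H2 (Rep.trivial ℤ (DihedralGroup n) A) ≃+ ModN A 2 × ModN A 2 × AddSubgroup.torsionBy A 2 :=
  let π := (H2π (Rep.trivial ℤ (DihedralGroup n) A)).hom.toAddMonoidHom
  have hπ : Function.Surjective π := (ModuleCat.epi_iff_surjective _).1 inferInstance
  have hker : π.ker = (dihedralClass hn).ker := by
    ext f
    rw [AddMonoidHom.mem_ker, AddMonoidHom.mem_ker, dihedralClass_eq_zero_iff]
    exact H2π_eq_zero_iff f
  (QuotientAddGroup.quotientKerEquivOfSurjective π hπ).symm.trans <|
    (QuotientAddGroup.quotientAddEquivOfEq hker).trans <|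
      QuotientAddGroup.quotientKerEquivOfSurjective _ (dihedralClass_surjective hn)

end Dihedral

end groupCohomology

namespace ZMod

noncomputable def modNTwoAddEquiv (m : ℕ) : ModN (ZMod m) 2 ≃+ ZMod (m.gcd 2) :=
  let red : ZMod m →ₗ[ℤ] ZMod (m.gcd 2) :=
    (castHom (Nat.gcd_dvd_left m 2) (ZMod (m.gcd 2))).toAddMonoidHom.toIntLinearMap
  have hker : LinearMap.range (LinearMap.lsmul ℤ (ZMod m) (2 : ℕ)) = LinearMap.ker red := by
    ext x
    constructor
    · rintro ⟨y, rfl⟩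
      have h2 : ((2 : ℕ) : ZMod (m.gcd 2)) = 0 :=
        (natCast_eq_zero_iff _ _).2 (Nat.gcd_dvd_right m 2)
      rw [LinearMap.mem_ker, LinearMap.lsmul_apply, map_zsmul, zsmul_eq_mul, Int.cast_natCast, h2,
        zero_mul]
    · obtain ⟨z, rfl⟩ := intCast_surjective x
      simp only [LinearMap.mem_ker, red, AddMonoidHom.coe_toIntLinearMap,
        RingHom.toAddMonoidHom_eq_coe, AddMonoidHom.coe_coe, map_intCast,
        intCast_zmod_eq_zero_iff_dvd]
      -- Bezout: `gcd m 2 = m a + 2 b`, and `m = 0` in `ZMod m`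
      rintro ⟨t, rfl⟩
      refine ⟨(t * Nat.gcdB m 2 : ℤ), ?_⟩
      rw [LinearMap.lsmul_apply, Nat.gcd_eq_gcd_ab m 2]
      push_cast
      rw [natCast_self]
      simp only [zsmul_eq_mul]
      ring
  ((Submodule.quotEquivOfEq _ _ hker).trans
    (red.quotKerEquivOfSurjective (castHom_surjective (Nat.gcd_dvd_left m 2)))).toAddEquiv

def torsionByTwoEmbedding (m : ℕ) : ZMod (m.gcd 2) →+ ZMod m :=
  ZMod.lift _ ⟨zmultiplesHom (ZMod m) ((m / m.gcd 2 : ℕ) : ZMod m), by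
    rw [zmultiplesHom_apply, natCast_zsmul, nsmul_eq_mul, ← Nat.cast_mul,
      Nat.mul_div_cancel' (Nat.gcd_dvd_left m 2), natCast_self]⟩

lemma torsionByTwoEmbedding_apply (m : ℕ) [NeZero m] (t : ZMod (m.gcd 2)) :
    torsionByTwoEmbedding m t = ((t.val * (m / m.gcd 2) : ℕ) : ZMod m) := by
  have : NeZero (m.gcd 2) := ⟨Nat.gcd_ne_zero_right two_ne_zero⟩
  conv_lhs => rw [← intCast_zmod_cast t, cast_eq_val]
  rw [torsionByTwoEmbedding, lift_coe, zmultiplesHom_apply, natCast_zsmul, nsmul_eq_mul,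
    Nat.cast_mul]

lemma torsionByTwoEmbedding_injective (m : ℕ) [NeZero m] :
    Function.Injective (torsionByTwoEmbedding m) := by
  have : NeZero (m.gcd 2) := ⟨Nat.gcd_ne_zero_right two_ne_zero⟩
  have hg : 0 < m.gcd 2 := Nat.gcd_pos_of_pos_right m two_pos
  have hc : 0 < m / m.gcd 2 := Nat.div_pos (Nat.gcd_le_left 2 (NeZero.pos m)) hg
  rw [injective_iff_map_eq_zero]
  intro t ht
  rw [torsionByTwoEmbedding_apply, natCast_eq_zero_iff] at ht
  conv at ht => lhs; rw [← Nat.mul_div_cancel' (Nat.gcd_dvd_left m 2)]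
  have hdvd := Nat.dvd_of_mul_dvd_mul_right hc ht
  rw [← val_eq_zero]
  exact Nat.eq_zero_of_dvd_of_lt hdvd (val_lt t)

lemma range_torsionByTwoEmbedding (m : ℕ) [NeZero m] :
    (torsionByTwoEmbedding m).range = AddSubgroup.torsionBy (ZMod m) 2 := by
  set g := m.gcd 2
  set c := m / g
  have hg : 0 < g := Nat.gcd_pos_of_pos_right m two_pos
  have hgc : g * c = m := Nat.mul_div_cancel' (Nat.gcd_dvd_left m 2)
  ext y
  rw [AddMonoidHom.mem_range]
  constructor
  · rintro ⟨t, rfl⟩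
    refine AddSubgroup.torsionBy.nsmul_iff.2 ?_
    rw [← map_nsmul, nsmul_eq_mul, (natCast_eq_zero_iff 2 g).2 (Nat.gcd_dvd_right m 2), zero_mul,
      map_zero]
  · intro hy
    replace hy : 2 • y = 0 := AddSubgroup.torsionBy.nsmul_iff.1 hy
    -- `m ∣ 2 y` forces `m / g ∣ y`, as `m / g` and `2 / g` are coprime
    have hdvd : m ∣ 2 * y.val := by
      rw [← natCast_eq_zero_iff, Nat.cast_mul, natCast_val, cast_id', id, ← nsmul_eq_mul]
      exact_mod_cast hy
    have hcy : c ∣ y.val := by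
      have hcop : Nat.Coprime c (2 / g) := Nat.coprime_div_gcd_div_gcd hg
      refine hcop.dvd_of_dvd_mul_left (Nat.dvd_of_mul_dvd_mul_left hg ?_)
      rwa [← mul_assoc, Nat.mul_div_cancel' (Nat.gcd_dvd_right m 2), hgc]
    obtain ⟨s, hs⟩ := hcy
    have hsg : s < g := by
      have := val_lt y
      rw [hs, ← hgc, mul_comm g] at this
      exact Nat.lt_of_mul_lt_mul_left this
    refine ⟨s, ?_⟩
    rw [torsionByTwoEmbedding_apply, val_natCast, Nat.mod_eq_of_lt hsg, mul_comm, ← hs,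
      natCast_zmod_val]

noncomputable def torsionByTwoAddEquiv (m : ℕ) [NeZero m] :
    AddSubgroup.torsionBy (ZMod m) 2 ≃+ ZMod (m.gcd 2) :=
  ((AddMonoidHom.ofInjective (torsionByTwoEmbedding_injective m)).trans
    (AddEquiv.addSubgroupCongr (range_torsionByTwoEmbedding m))).symm

end ZMod

/-- Let `k` be an even positive integer and `m` any positive integer. Then the
second group cohomology `H²(D₂ₖ, ℤ/m)` of the dihedral group of order `2k` with coefficients
in `ℤ/m` (trivial action) is isomorphic, as an abelian group, to the direct sum of three copies
of `ℤ/gcd(m, 2)`. -/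
theorem stmt_5 (k m : ℕ) (hk : 0 < k) (hkeven : Even k) (hm : 0 < m) :
    Nonempty
      ((groupCohomology (Rep.trivial ℤ (DihedralGroup k) (ZMod m)) 2) ≃+
        (ZMod (Nat.gcd m 2) × ZMod (Nat.gcd m 2) × ZMod (Nat.gcd m 2))) := by
  have : NeZero k := ⟨hk.ne'⟩
  have : NeZero m := ⟨hm.ne'⟩
  exact ⟨(groupCohomology.H2DihedralAddEquiv hkeven).trans <|
    (ZMod.modNTwoAddEquiv m).prodCongr <|
      (ZMod.modNTwoAddEquiv m).prodCongr (ZMod.torsionByTwoAddEquiv m)⟩
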